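/- Let b ∈ V^{⊗(m−1)} be a maximal vector of weight i_b. Then: (a) Φ₁(b) = b ⊗ y₁ satisfies E Φ₁(b) = 0 and is a weight vector of weight i_b + 1; (b) if i_b > 0 then Φ₂(b) = [i_b] b ⊗ y₋₁ − v^{i_b} (F b) ⊗ y₁ satisfies E Φ₂(b) = 0, lies in the span of the basis vectors y_i with i₁+⋯+i_m = i_b − 1, and is nonzero whenever [i_b] ≠ 0 in k. -/

import Mathlib

noncomputable section
attribute [local instance] Classical.propDecidable

/-- Balanced quantum integer `[m]` for a natural number `m`. -/
def qintN {k : Type*} [Field k] (v : k) (m : ℕ) : k :=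
  ∑ t ∈ Finset.range m, v ^ ((m : ℤ) - 1 - 2 * t)

/-- Balanced quantum integer `[m]` for an integer `m`. -/
def qint {k : Type*} [Field k] (v : k) (m : ℤ) : k :=
  if 0 ≤ m then qintN v m.toNat else - qintN v (-m).toNat

/-- Quantum factorial `[m]! = [1][2]⋯[m]`. -/
def qfact {k : Type*} [Field k] (v : k) (m : ℕ) : k :=
  ∏ j ∈ Finset.range m, qintN v (j + 1)

/-- The `n`-th tensor power of `V = k²`, realized as coordinate functions with
respect to the basis `y_i`, `i ∈ {1,-1}ⁿ` (here `true ↔ 1`, `false ↔ -1`). -/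
abbrev Tn (k : Type*) [Field k] (n : ℕ) := (Fin n → Bool) → k

/-- The sign of an index entry: `true ↦ 1`, `false ↦ -1`. -/
def sgn (b : Bool) : ℤ := if b then 1 else -1

/-- The weight `i₁ + ⋯ + i_n` of a basis index. -/
def wt {n : ℕ} (i : Fin n → Bool) : ℤ := ∑ t, sgn (i t)

variable {k : Type*} [Field k]

/-- The operator `E` on `V^{⊗n}`. -/
def Eop (v : k) (n : ℕ) : Tn k n →ₗ[k] Tn k n where
  toFun f := fun i =>
    ∑ j ∈ Finset.univ.filter (fun j => i j = true),
      v ^ (∑ t ∈ Finset.univ.filter (fun t => t < j), sgn (i t)) * f (Function.update i j false)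
  map_add' f g := by
    funext i
    simp [Pi.add_apply, mul_add, Finset.sum_add_distrib]
  map_smul' c f := by
    funext i
    simp only [Pi.smul_apply, smul_eq_mul, RingHom.id_apply]
    rw [Finset.mul_sum]
    exact Finset.sum_congr rfl fun j _ => by ring

/-- The operator `F` on `V^{⊗n}`. -/
def Fop (v : k) (n : ℕ) : Tn k n →ₗ[k] Tn k n where
  toFun f := fun i =>
    ∑ j ∈ Finset.univ.filter (fun j => i j = false),
      v ^ (-(∑ t ∈ Finset.univ.filter (fun t => j < t), sgn (i t))) * f (Function.update i j true)
  map_add' f g := by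
    funext i
    simp [Pi.add_apply, mul_add, Finset.sum_add_distrib]
  map_smul' c f := by
    funext i
    simp only [Pi.smul_apply, smul_eq_mul, RingHom.id_apply]
    rw [Finset.mul_sum]
    exact Finset.sum_congr rfl fun j _ => by ring

/-- The operator `K` on `V^{⊗n}`. -/
def Kop (v : k) (n : ℕ) : Tn k n →ₗ[k] Tn k n where
  toFun f := fun i => v ^ (wt i) * f i
  map_add' f g := by
    funext i
    simp [Pi.add_apply, mul_add]
  map_smul' c f := by
    funext i
    simp only [Pi.smul_apply, smul_eq_mul, RingHom.id_apply]
    ring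

/-- The symmetric bilinear form on `V^{⊗n}` making the `y_i` orthonormal. -/
def form {n : ℕ} (f g : Tn k n) : k := ∑ i, f i * g i

/-- Tensoring on the right with the basis vector `y₁` (if `b = true`) or `y₋₁`
(if `b = false`). -/
def tensY {n : ℕ} (b : Bool) (f : Tn k n) : Tn k (n + 1) :=
  fun i => if i (Fin.last n) = b then f (fun t => i t.castSucc) else 0

/-- `Φ₁(b) = b ⊗ y₁`. -/
def Phi1 {n : ℕ} (f : Tn k n) : Tn k (n + 1) := tensY true f

/-- `Φ₂(b) = [w] b ⊗ y₋₁ − v^w (F b) ⊗ y₁`, where `w` is the weight of `b`. -/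
def Phi2 (v : k) {n : ℕ} (w : ℤ) (f : Tn k n) : Tn k (n + 1) :=
  qint v w • tensY false f - v ^ w • tensY true (Fop v n f)

/-- A `1`-factor: all partial sums are nonnegative. -/
def IsOneFactor {n : ℕ} (α : Fin n → Bool) : Prop :=
  ∀ j : Fin n, 0 ≤ ∑ t ∈ Finset.univ.filter (fun t => t ≤ j), sgn (α t)

/-- The orthogonal maximal vectors `Ω(α)`, defined recursively. -/
def Omega (v : k) : (n : ℕ) → (Fin n → Bool) → Tn k n
  | 0, _ => fun _ => 1
  | n + 1, α =>
      if α (Fin.last n) = true then Phi1 (Omega v n fun t => α t.castSucc)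
      else Phi2 v (wt fun t => α t.castSucc) (Omega v n fun t => α t.castSucc)

/-- Exchanging the entries of an index at two positions. -/
def swapPair {n : ℕ} (a b : Fin n) (i : Fin n → Bool) : Fin n → Bool :=
  fun t => if t = a then i b else if t = b then i a else i t

/-- The Temperley--Lieb operator `ė` acting on tensor positions `a` and `b`
(intended: `b = a + 1`). -/
def eop (v : k) {n : ℕ} (a b : Fin n) : Tn k n →ₗ[k] Tn k n where
  toFun f := fun i =>
    if i a = true ∧ i b = false then -v⁻¹ * f i + f (swapPair a b i)
    else if i a = false ∧ i b = true then f (swapPair a b i) - v * f i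
    else 0
  map_add' f g := by
    funext i
    simp only [Pi.add_apply]
    split_ifs <;> ring
  map_smul' c f := by
    funext i
    simp only [Pi.smul_apply, smul_eq_mul, RingHom.id_apply]
    split_ifs <;> ring

/-- The partial sum `α₁ + ⋯ + α_{q-1}` of the entries before position `q`. -/
def prefSum {n : ℕ} (α : Fin n → Bool) (q : Fin n) : ℤ :=
  ∑ t ∈ Finset.univ.filter (fun t => t < q), sgn (α t)

/-- `(i, j)` is a pair of `α`: `α_i = 1` and `j` is the least index `> i` with
`α_i + ⋯ + α_j = 0`. -/
def PairedAt {n : ℕ} (α : Fin n → Bool) (i j : Fin n) : Prop :=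
  α i = true ∧ i < j ∧ (∑ t ∈ Finset.Icc i j, sgn (α t)) = 0 ∧
    ∀ j' : Fin n, i < j' → j' < j → (∑ t ∈ Finset.Icc i j', sgn (α t)) ≠ 0

/-- An index is a defect if it belongs to no pair. -/
def IsDefect {n : ℕ} (α : Fin n → Bool) (i : Fin n) : Prop :=
  (∀ j, ¬ PairedAt α i j) ∧ (∀ j, ¬ PairedAt α j i)

/-- `γ ∈ S(α)`: `γ` is obtained from `α` by negating both entries of each pair
in some subset of the pairs of `α`. -/
def InS {n : ℕ} (α γ : Fin n → Bool) : Prop :=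
  (∀ i, IsDefect α i → γ i = α i) ∧
  (∀ i j, PairedAt α i j → (γ i = α i ∧ γ j = α j) ∨ (γ i = !α i ∧ γ j = !α j))

/-- `σ(α, γ)`: the number of pairs of `α` negated to obtain `γ`. -/
def sigmaCount {n : ℕ} (α γ : Fin n → Bool) : ℕ :=
  Nat.card {p : Fin n × Fin n // PairedAt α p.1 p.2 ∧ γ p.1 ≠ α p.1}

/-- The natural (cellular) vectors `N(α) = Σ_{γ ∈ S(α)} (−v)^{σ(α,γ)} y_γ`,
written in coordinates. -/
def Nvec (v : k) (n : ℕ) (α : Fin n → Bool) : Tn k n :=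
  fun γ => if InS α γ then (-v) ^ (sigmaCount α γ) else 0

/-- `β^{(j)}` (0-indexed `j`): change the entry of `β` at the position of its
`(j+1)`-st defect (0-indexed: defect number `j`) to `−1`. -/
def linkDefect {m : ℕ} (β : Fin m → Bool) (j : ℕ) : Fin m → Bool :=
  match (Finset.sort (Finset.univ.filter (fun i => IsDefect β i)) (· ≤ ·))[j]? with
  | some q => Function.update β q false
  | none => β


/-!
Everything is checked coordinatewise. On a last tensor factor `E` acts by the coproduct rule
`E (f ⊗ y₁) = E f ⊗ y₁` and `E (f ⊗ y₋₁) = E f ⊗ y₋₁ + K f ⊗ y₁`, so `Φ₁` preserves maximality at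
once. For `Φ₂` the input is the relation `E F - F E = [wt]`: at a basis index the terms of `E F f`
and `F E f` acting at two different positions coincide, and the remaining diagonal terms add up to
`∑ⱼ αⱼ v^(α₁+⋯+αⱼ₋₁ - αⱼ₊₁-⋯-αₙ) = [α₁+⋯+αₙ]`, by induction on `n`. For a maximal
`b` of weight `w` this gives `E F b = [w] b`, which cancels against `K b = v^w b` in `E Φ₂(b)`.
-/

open Finset Function

@[simp] lemma sgn_true : sgn true = 1 := rfl

@[simp] lemma sgn_false : sgn false = -1 := rfl

lemma qintN_succ (v : k) (hv : v ≠ 0) (m : ℕ) :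
    qintN v (m + 1) = v⁻¹ * qintN v m + v ^ (m : ℤ) := by
  rw [qintN, Finset.sum_range_succ', qintN, Finset.mul_sum]
  congr 1
  · refine Finset.sum_congr rfl fun t _ => ?_
    rw [← zpow_neg_one, ← zpow_add₀ hv]
    congr 1
    push_cast
    ring
  · congr 1
    push_cast
    ring

lemma qintN_succ' (v : k) (hv : v ≠ 0) (m : ℕ) :
    qintN v (m + 1) = v * qintN v m + v ^ (-(m : ℤ)) := by
  rw [qintN, Finset.sum_range_succ, qintN, Finset.mul_sum]
  congr 1
  · refine Finset.sum_congr rfl fun t _ => ?_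
    rw [← zpow_one_add₀ hv]
    congr 1
    push_cast
    ring
  · congr 1
    push_cast
    ring

lemma qint_add_one (v : k) (hv : v ≠ 0) (w : ℤ) :
    qint v (w + 1) = v⁻¹ * qint v w + v ^ w := by
  unfold qint
  obtain h | rfl | h := lt_trichotomy w (-1)
  · rw [if_neg (by omega), if_neg (by omega),
      show (-w).toNat = (-(w + 1)).toNat + 1 by omega, qintN_succ' v hv,
      show -(((-(w + 1)).toNat : ℕ) : ℤ) = w + 1 by omega, zpow_add_one₀ hv]
    field_simp
    ring
  · simp [qintN]
  · rw [if_pos (by omega), if_pos (by omega), show (w + 1).toNat = w.toNat + 1 by omega,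
      qintN_succ v hv, show ((w.toNat : ℕ) : ℤ) = w by omega]

lemma qint_sub_one (v : k) (hv : v ≠ 0) (w : ℤ) :
    qint v (w - 1) = v * qint v w - v ^ w := by
  have h := qint_add_one v hv (w - 1)
  rw [sub_add_cancel] at h
  rw [h, zpow_sub_one₀ hv]
  field_simp
  ring

lemma qint_add_sgn (v : k) (hv : v ≠ 0) (w : ℤ) (c : Bool) :
    qint v (w + sgn c) = v ^ (-sgn c) * qint v w + sgn c * v ^ w := by
  cases c
  · simpa [← sub_eq_add_neg] using qint_sub_one v hv w
  · simpa using qint_add_one v hv w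

variable {n : ℕ}

def sufSum (α : Fin n → Bool) (q : Fin n) : ℤ :=
  ∑ t ∈ univ.filter (fun t => q < t), sgn (α t)

lemma Eop_apply (v : k) (f : Tn k n) (i : Fin n → Bool) :
    Eop v n f i = ∑ j ∈ univ.filter (fun j => i j = true),
      v ^ prefSum i j * f (update i j false) := rfl

lemma Fop_apply (v : k) (f : Tn k n) (i : Fin n → Bool) :
    Fop v n f i = ∑ j ∈ univ.filter (fun j => i j = false),
      v ^ (-sufSum i j) * f (update i j true) := rfl

lemma sum_sgn_update (s : Finset (Fin n)) (α : Fin n → Bool) (p : Fin n) (c : Bool) :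
    ∑ t ∈ s, sgn (update α p c t)
      = ∑ t ∈ s, sgn (α t) + if p ∈ s then sgn c - sgn (α p) else 0 := by
  have h (t : Fin n) : sgn (update α p c t) = sgn (α t) + if t = p then sgn c - sgn (α p) else 0 := by
    rcases eq_or_ne t p with rfl | h <;> simp [*]
  simp_rw [h, Finset.sum_add_distrib, Finset.sum_ite_eq' s p]

lemma wt_update (α : Fin n → Bool) (p : Fin n) (c : Bool) :
    wt (update α p c) = wt α + (sgn c - sgn (α p)) := by
  simp [wt, sum_sgn_update]

lemma prefSum_update (α : Fin n → Bool) (p q : Fin n) (c : Bool) :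
    prefSum (update α p c) q = prefSum α q + if p < q then sgn c - sgn (α p) else 0 := by
  simp [prefSum, sum_sgn_update]

lemma sufSum_update (α : Fin n → Bool) (p q : Fin n) (c : Bool) :
    sufSum (update α p c) q = sufSum α q + if q < p then sgn c - sgn (α p) else 0 := by
  simp [sufSum, sum_sgn_update]

lemma prefSum_castSucc (α : Fin (n + 1) → Bool) (q : Fin n) :
    prefSum α q.castSucc = prefSum (Fin.init α) q := by
  simp [prefSum, Finset.sum_filter, Fin.sum_univ_castSucc, Fin.init,
    (Fin.castSucc_lt_last q).not_gt]

lemma prefSum_last (α : Fin (n + 1) → Bool) : prefSum α (Fin.last n) = wt (Fin.init α) := by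
  simp [prefSum, Finset.sum_filter, Fin.sum_univ_castSucc, Fin.castSucc_lt_last, wt, Fin.init]

lemma sufSum_castSucc (α : Fin (n + 1) → Bool) (q : Fin n) :
    sufSum α q.castSucc = sufSum (Fin.init α) q + sgn (α (Fin.last n)) := by
  simp [sufSum, Finset.sum_filter, Fin.sum_univ_castSucc, Fin.castSucc_lt_last, Fin.init]

lemma sufSum_last (α : Fin (n + 1) → Bool) : sufSum α (Fin.last n) = 0 := by
  simp [sufSum, Finset.sum_filter, Fin.sum_univ_castSucc, (Fin.castSucc_lt_last _).not_gt]

lemma wt_eq_wt_init_add (α : Fin (n + 1) → Bool) :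
    wt α = wt (Fin.init α) + sgn (α (Fin.last n)) := by
  rw [wt, Fin.sum_univ_castSucc]
  rfl

lemma sum_sgn_mul_zpow_prefSum_sub_sufSum (v : k) (hv : v ≠ 0) (α : Fin n → Bool) :
    ∑ j, (sgn (α j) : k) * v ^ (prefSum α j - sufSum α j) = qint v (wt α) := by
  induction n with
  | zero => simp [wt, qint, qintN]
  | succ n ih =>
    have hterm (j : Fin n) :
        (sgn (α j.castSucc) : k) * v ^ (prefSum α j.castSucc - sufSum α j.castSucc)
          = (sgn (Fin.init α j) : k) * v ^ (prefSum (Fin.init α) j - sufSum (Fin.init α) j)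
            * v ^ (-sgn (α (Fin.last n))) := by
      rw [prefSum_castSucc, sufSum_castSucc, mul_assoc, ← zpow_add₀ hv]
      congr 2
      ring
    rw [Fin.sum_univ_castSucc, Finset.sum_congr rfl fun j _ => hterm j, ← Finset.sum_mul, ih,
      prefSum_last, sufSum_last, wt_eq_wt_init_add, qint_add_sgn v hv]
    simp only [sub_zero]
    ring

lemma sum_filter_true_sub_sum_filter_false (α : Fin n → Bool) (g : Fin n → k) :
    ∑ j ∈ univ.filter (fun j => α j = true), g j - ∑ j ∈ univ.filter (fun j => α j = false), g j
      = ∑ j, (sgn (α j) : k) * g j := by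
  rw [Finset.sum_filter, Finset.sum_filter, ← Finset.sum_sub_distrib]
  refine Finset.sum_congr rfl fun j _ => ?_
  cases α j <;> simp

/-- The part of `E F f` at `α` (equally of `F E f`, see `Fop_Eop_apply`) in which the two
operators act at different positions. -/
def crossSum (v : k) (f : Tn k n) (α : Fin n → Bool) : k :=
  ∑ j ∈ univ.filter (fun j => α j = true), ∑ l ∈ univ.filter (fun l => α l = false),
    v ^ (prefSum α j - sufSum α l + if l < j then 2 else 0) * f (update (update α j false) l true)

lemma filter_update_eq_insert {α : Fin n → Bool} {p : Fin n} {c : Bool} (h : α p = !c) :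
    univ.filter (fun q => update α p c q = c) = insert p (univ.filter (fun q => α q = c)) := by
  ext q
  rcases eq_or_ne q p with rfl | hq <;> simp [*]

lemma Fop_apply_update_false (v : k) (f : Tn k n) {α : Fin n → Bool} {j : Fin n}
    (h : α j = true) :
    Fop v n f (update α j false) = v ^ (-sufSum α j) * f α
      + ∑ l ∈ univ.filter (fun l => α l = false),
          v ^ (-sufSum α l + if l < j then 2 else 0) * f (update (update α j false) l true) := by
  rw [Fop_apply, filter_update_eq_insert (by simp [h]), Finset.sum_insert (by simp [h]),
    sufSum_update, update_idem, update_eq_self_iff.mpr h.symm]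
  simp only [lt_irrefl, if_false, add_zero]
  congr 1
  refine Finset.sum_congr rfl fun l _ => ?_
  rw [sufSum_update, h]
  congr 2
  simp only [sgn_false, sgn_true]
  split_ifs <;> ring

lemma Eop_apply_update_true (v : k) (f : Tn k n) {α : Fin n → Bool} {l : Fin n}
    (h : α l = false) :
    Eop v n f (update α l true) = v ^ prefSum α l * f α
      + ∑ j ∈ univ.filter (fun j => α j = true),
          v ^ (prefSum α j + if l < j then 2 else 0) * f (update (update α l true) j false) := by
  rw [Eop_apply, filter_update_eq_insert (by simp [h]), Finset.sum_insert (by simp [h]),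
    prefSum_update, update_idem, update_eq_self_iff.mpr h.symm]
  simp only [lt_irrefl, if_false, add_zero]
  congr 1
  refine Finset.sum_congr rfl fun j _ => ?_
  rw [prefSum_update, h]
  congr 2

lemma Eop_Fop_apply (v : k) (hv : v ≠ 0) (f : Tn k n) (α : Fin n → Bool) :
    Eop v n (Fop v n f) α
      = (∑ j ∈ univ.filter (fun j => α j = true), v ^ (prefSum α j - sufSum α j)) * f α
        + crossSum v f α := by
  rw [Eop_apply, crossSum, Finset.sum_mul, ← Finset.sum_add_distrib]
  refine Finset.sum_congr rfl fun j hj => ?_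
  rw [Fop_apply_update_false v f (by simpa using hj), mul_add, Finset.mul_sum, ← mul_assoc,
    ← zpow_add₀ hv, ← sub_eq_add_neg]
  congr 1
  refine Finset.sum_congr rfl fun l _ => ?_
  rw [← mul_assoc, ← zpow_add₀ hv, ← add_assoc, ← sub_eq_add_neg]

lemma Fop_Eop_apply (v : k) (hv : v ≠ 0) (f : Tn k n) (α : Fin n → Bool) :
    Fop v n (Eop v n f) α
      = (∑ l ∈ univ.filter (fun l => α l = false), v ^ (prefSum α l - sufSum α l)) * f α
        + crossSum v f α := by
  rw [Fop_apply, crossSum, Finset.sum_comm, Finset.sum_mul, ← Finset.sum_add_distrib]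
  refine Finset.sum_congr rfl fun l hl => ?_
  rw [Eop_apply_update_true v f (by simpa using hl), mul_add, Finset.mul_sum, ← mul_assoc,
    ← zpow_add₀ hv, neg_add_eq_sub]
  congr 1
  refine Finset.sum_congr rfl fun j hj => ?_
  have hjl : j ≠ l := by
    rintro rfl
    simp_all
  rw [← mul_assoc, ← zpow_add₀ hv, update_comm hjl]
  congr 2
  ring

lemma Eop_Fop_apply_sub_Fop_Eop_apply (v : k) (hv : v ≠ 0) (f : Tn k n) (α : Fin n → Bool) :
    Eop v n (Fop v n f) α - Fop v n (Eop v n f) α = qint v (wt α) * f α := by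
  rw [Eop_Fop_apply v hv, Fop_Eop_apply v hv, add_sub_add_right_eq_sub, ← sub_mul,
    sum_filter_true_sub_sum_filter_false, sum_sgn_mul_zpow_prefSum_sub_sufSum v hv]

lemma tensY_apply (c : Bool) (f : Tn k n) (i : Fin (n + 1) → Bool) :
    tensY c f i = if i (Fin.last n) = c then f (Fin.init i) else 0 := rfl

lemma tensY_snoc (c d : Bool) (f : Tn k n) (i : Fin n → Bool) :
    tensY c f (Fin.snoc i d) = if d = c then f i else 0 := by
  simp [tensY_apply]

lemma tensY_smul (c : Bool) (a : k) (f : Tn k n) : tensY c (a • f) = a • tensY c f := by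
  ext i
  simp [tensY_apply]

lemma tensY_zero (c : Bool) : tensY c (0 : Tn k n) = 0 := by
  simpa using tensY_smul c (0 : k) 0

lemma Eop_tensY_apply (v : k) (c : Bool) (f : Tn k n) (i : Fin (n + 1) → Bool) :
    Eop v (n + 1) (tensY c f) i = tensY c (Eop v n f) i
      + if i (Fin.last n) = true ∧ c = false then v ^ wt (Fin.init i) * f (Fin.init i) else 0 := by
  have hupd (j : Fin n) : tensY c f (update i j.castSucc false)
      = if i (Fin.last n) = c then f (update (Fin.init i) j false) else 0 := by
    rw [tensY_apply, update_of_ne (Fin.castSucc_lt_last j).ne', Fin.init_update_castSucc]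
  rw [Eop_apply, Finset.sum_filter, Fin.sum_univ_castSucc]
  simp_rw [hupd, prefSum_castSucc, prefSum_last, tensY_apply, update_self, Fin.init_update_last,
    Eop_apply, Finset.sum_filter]
  -- `rfl` unfolds a `Fin.init` that `simp` cannot reach inside a decidability instance
  cases i (Fin.last n) <;> cases c <;> simp [Fin.init] <;> rfl

lemma Eop_tensY_true (v : k) (f : Tn k n) :
    Eop v (n + 1) (tensY true f) = tensY true (Eop v n f) := by
  ext i
  simp [Eop_tensY_apply]

lemma Eop_tensY_false (v : k) (f : Tn k n) :
    Eop v (n + 1) (tensY false f) = tensY false (Eop v n f) + tensY true (Kop v n f) := by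
  ext i
  rw [Eop_tensY_apply, Pi.add_apply, tensY_apply true]
  simp [Kop]

def HasWeight (f : Tn k n) (w : ℤ) : Prop := ∀ i, f i ≠ 0 → wt i = w

lemma HasWeight.smul {f : Tn k n} {w : ℤ} (hf : HasWeight f w) (a : k) : HasWeight (a • f) w :=
  fun i hi => hf i (right_ne_zero_of_mul hi)

lemma HasWeight.sub {f g : Tn k n} {w : ℤ} (hf : HasWeight f w) (hg : HasWeight g w) :
    HasWeight (f - g) w := by
  intro i hi
  by_cases hfi : f i = 0
  · exact hg i (by simpa [hfi] using hi)
  · exact hf i hfi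

lemma HasWeight.tensY {f : Tn k n} {w : ℤ} (hf : HasWeight f w) (c : Bool) :
    HasWeight (tensY c f) (w + sgn c) := by
  intro i hi
  rw [tensY_apply] at hi
  split_ifs at hi with hc
  · rw [wt_eq_wt_init_add, hf _ hi, hc]
  · exact absurd rfl hi

lemma HasWeight.Fop {f : Tn k n} {w : ℤ} (hf : HasWeight f w) (v : k) :
    HasWeight (Fop v n f) (w - 2) := by
  intro i hi
  rw [Fop_apply] at hi
  obtain ⟨j, hj, hfj⟩ := Finset.exists_ne_zero_of_sum_ne_zero hi
  have hij : i j = false := by simpa using hj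
  have := hf _ (right_ne_zero_of_mul hfj)
  rw [wt_update, hij] at this
  rw [sgn_true, sgn_false] at this
  omega

lemma Kop_eq_smul_of_hasWeight (v : k) {f : Tn k n} {w : ℤ} (hf : HasWeight f w) :
    Kop v n f = v ^ w • f := by
  ext i
  by_cases hfi : f i = 0
  · simp [Kop, hfi]
  · simp [Kop, hf i hfi]

lemma Eop_Fop_eq_smul_of_max (v : k) (hv : v ≠ 0) {f : Tn k n} {w : ℤ} (hf : HasWeight f w)
    (hmax : Eop v n f = 0) : Eop v n (Fop v n f) = qint v w • f := by
  ext i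
  have h := Eop_Fop_apply_sub_Fop_Eop_apply v hv f i
  rw [hmax, map_zero, Pi.zero_apply, sub_zero] at h
  rw [h, Pi.smul_apply, smul_eq_mul]
  by_cases hfi : f i = 0
  · simp [hfi]
  · rw [hf i hfi]

lemma tensY_ne_zero (c : Bool) {f : Tn k n} (hf : f ≠ 0) : tensY c f ≠ 0 := by
  obtain ⟨i, hi⟩ := Function.ne_iff.mp hf
  exact Function.ne_iff.mpr ⟨Fin.snoc i c, by simpa [tensY_snoc] using hi⟩

lemma Eop_Phi1_of_max (v : k) {f : Tn k n} (hmax : Eop v n f = 0) :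
    Eop v (n + 1) (Phi1 f) = 0 := by
  rw [Phi1, Eop_tensY_true, hmax, tensY_zero]

lemma HasWeight.Phi1 {f : Tn k n} {w : ℤ} (hf : HasWeight f w) : HasWeight (Phi1 f) (w + 1) :=
  hf.tensY true

lemma Eop_Phi2_of_max (v : k) (hv : v ≠ 0) {f : Tn k n} {w : ℤ} (hf : HasWeight f w)
    (hmax : Eop v n f = 0) : Eop v (n + 1) (Phi2 v w f) = 0 := by
  rw [Phi2, map_sub, map_smul, map_smul, Eop_tensY_false, Eop_tensY_true,
    Eop_Fop_eq_smul_of_max v hv hf hmax, Kop_eq_smul_of_hasWeight v hf, hmax]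
  simp only [tensY_zero, tensY_smul, zero_add, smul_smul, mul_comm, sub_self]

lemma HasWeight.Phi2 {f : Tn k n} {w : ℤ} (hf : HasWeight f w) (v : k) :
    HasWeight (Phi2 v w f) (w - 1) := by
  have h₁ := hf.tensY false
  have h₂ := (hf.Fop v).tensY true
  rw [sgn_false, ← sub_eq_add_neg] at h₁
  rw [sgn_true, show w - 2 + 1 = w - 1 by ring] at h₂
  exact (h₁.smul _).sub (h₂.smul _)

lemma Phi2_ne_zero (v : k) {w : ℤ} (hw : qint v w ≠ 0) {f : Tn k n} (hf : f ≠ 0) :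
    Phi2 v w f ≠ 0 := by
  obtain ⟨i, hi⟩ := Function.ne_iff.mp hf
  refine Function.ne_iff.mpr ⟨Fin.snoc i false, ?_⟩
  simpa [Phi2, tensY_snoc] using mul_ne_zero hw hi

/-- `Φ₁` and `Φ₂` of a maximal vector are maximal, of weights
`i_b + 1` and `i_b - 1` respectively. -/
theorem stmt_7 {k : Type*} [Field k] (v : k) (hv : v ≠ 0) (n : ℕ)
    (b : Tn k n) (w : ℤ) (hb0 : b ≠ 0) (hbw : ∀ i, b i ≠ 0 → wt i = w)
    (hmax : Eop v n b = 0) :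
    (Eop v (n + 1) (Phi1 b) = 0 ∧ Phi1 b ≠ 0 ∧
      (∀ i, Phi1 b i ≠ 0 → wt i = w + 1)) ∧
    (0 < w →
      Eop v (n + 1) (Phi2 v w b) = 0 ∧
      (∀ i, Phi2 v w b i ≠ 0 → wt i = w - 1) ∧
      (qint v w ≠ 0 → Phi2 v w b ≠ 0)) := by
  have hb : HasWeight b w := hbw
  exact ⟨⟨Eop_Phi1_of_max v hmax, tensY_ne_zero true hb0, hb.Phi1⟩,
    fun _ => ⟨Eop_Phi2_of_max v hv hb hmax, hb.Phi2 v, fun hw => Phi2_ne_zero v hw hb0⟩⟩
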